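/- Writer comonad law L3' with accumulating second arrow: let f : Set ℕ × Zipper α → Set ℕ × β and g : Set ℕ × Zipper β → Set ℕ × γ be arrows such that g is accumulating, i.e. w' ⊆ (g (w', z')).1 for all (w', z'). Then extendW g ∘ extendW f = extendW (g ∘ extendW f) as functions Set ℕ × Zipper α → Set ℕ × Zipper γ: both the accumulated deletion-set components and the zipper components coincide, the deletion-set components by associativity of the deletion monoid (Set ℕ, ∪, ∅) and the zipper components by the Zipper comonad law L3'. -/
import Mathlib


/-- A list zipper: a focused element with left context (stored reversed,
nearest neighbor first) and right context. -/
structure Zipper (α : Type*) where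
  left : List α
  focus : α
  right : List α

namespace Zipper

variable {α β γ δ : Type*}

/-- Extract the focused element. -/
def extract (z : Zipper α) : α := z.focus

/-- Move the focus one step to the left (identity if the left context is empty). -/
def moveLeft : Zipper α → Zipper α
  | ⟨a :: l, c, r⟩ => ⟨l, a, c :: r⟩
  | z => z

/-- Move the focus one step to the right (identity if the right context is empty). -/
def moveRight : Zipper α → Zipper α
  | ⟨l, c, b :: r⟩ => ⟨c :: l, b, r⟩
  | z => z

/-- Auxiliary: successive left shifts, structurally on the left context. -/
def leftsAux : List α → α → List α → List (Zipper α)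
  | [], _, _ => []
  | a :: l, c, r => ⟨l, a, c :: r⟩ :: leftsAux l a (c :: r)

/-- The list [moveLeft z, moveLeft (moveLeft z), …] of successive left shifts. -/
def lefts (z : Zipper α) : List (Zipper α) := leftsAux z.left z.focus z.right

/-- Auxiliary: successive right shifts, structurally on the right context. -/
def rightsAux : List α → α → List α → List (Zipper α)
  | _, _, [] => []
  | l, c, b :: r => ⟨c :: l, b, r⟩ :: rightsAux (c :: l) b r

/-- The list [moveRight z, moveRight (moveRight z), …] of successive right shifts. -/
def rights (z : Zipper α) : List (Zipper α) := rightsAux z.left z.focus z.right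

/-- CoKleisli extension: apply the local rule `f` at every position. -/
def extend (f : Zipper α → β) (z : Zipper α) : Zipper β :=
  ⟨(lefts z).map f, f z, (rights z).map f⟩

/-- The underlying list of a zipper. -/
def toList (z : Zipper α) : List α := z.left.reverse ++ [z.focus] ++ z.right

/-- The zipper refocused at position `i` (intended for `i < (toList z).length`). -/
def focusAt (z : Zipper α) (i : ℕ) : Zipper α :=
  ⟨((toList z).take i).reverse, (toList z).getD i z.focus, (toList z).drop (i + 1)⟩


theorem length_toList (z : Zipper α) :
    (toList z).length = z.left.length + 1 + z.right.length := by
  simp [toList]; omega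

theorem focusAt_eq (z : Zipper α) (i : ℕ) (hi : i < (toList z).length) :
    focusAt z i = ⟨((toList z).take i).reverse, (toList z)[i], (toList z).drop (i + 1)⟩ := by
  simp [focusAt, List.getD_eq_getElem _ _ hi, List.getD, List.getElem?_eq_getElem hi]

theorem toList_focusAt (z : Zipper α) (i : ℕ) (hi : i < (toList z).length) :
    toList (focusAt z i) = toList z := by
  rw [focusAt_eq _ _ hi]
  show ((toList z).take i).reverse.reverse ++ [(toList z)[i]] ++ (toList z).drop (i+1) = toList z
  rw [List.reverse_reverse, List.append_assoc, List.singleton_append,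
    ← List.drop_eq_getElem_cons hi, List.take_append_drop]

theorem focusAt_focusAt (z : Zipper α) (i k : ℕ) (hi : i < (toList z).length)
    (hk : k < (toList z).length) : focusAt (focusAt z i) k = focusAt z k := by
  have h := toList_focusAt z i hi
  rw [focusAt_eq _ k (h ▸ hk), focusAt_eq _ k hk]
  have : (toList (focusAt z i))[k]'(h ▸ hk) = (toList z)[k]'hk := by
    apply List.getElem_of_eq h
  rw [Zipper.mk.injEq]
  exact ⟨by rw [h], this, by rw [h]⟩

theorem focusAt_left_length (z : Zipper α) :
    focusAt z z.left.length = z := by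
  obtain ⟨l, c, r⟩ := z
  have hlen : l.length < (toList (⟨l, c, r⟩ : Zipper α)).length := by
    simp [toList]
  rw [focusAt_eq _ _ hlen]
  have ht : toList (⟨l, c, r⟩ : Zipper α) = l.reverse ++ [c] ++ r := rfl
  rw [Zipper.mk.injEq]
  refine ⟨?_, ?_, ?_⟩
  · rw [ht]
    rw [List.append_assoc, ← l.length_reverse, List.take_left, List.reverse_reverse]
  · have : (toList (⟨l, c, r⟩ : Zipper α))[l.length]'hlen = ((l.reverse ++ [c]) ++ r)[l.length]'(by rw [ht] at hlen; exact hlen) := rfl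
    rw [this, List.getElem_append_left (by simp), List.getElem_append_right (by simp)]
    simp
  · rw [ht]
    have h2 : l.length + 1 = (l.reverse ++ [c]).length := by simp
    rw [h2, List.drop_left]


theorem focusAt_congr {z z' : Zipper α} (h : toList z = toList z') (i : ℕ)
    (hi : i < (toList z).length) : focusAt z i = focusAt z' i := by
  rw [focusAt_eq _ _ hi, focusAt_eq _ _ (h ▸ hi)]
  rw [Zipper.mk.injEq]
  exact ⟨by rw [h], List.getElem_of_eq h _, by rw [h]⟩

theorem leftsAux_eq (l : List α) : ∀ (c : α) (r : List α),
    leftsAux l c r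
      = ((List.range l.length).map (fun j => focusAt ⟨l, c, r⟩ j)).reverse := by
  induction l with
  | nil => intro c r; simp [leftsAux]
  | cons a l ih =>
    intro c r
    have htl : toList (⟨l, a, c :: r⟩ : Zipper α) = toList (⟨a :: l, c, r⟩ : Zipper α) := by
      simp [toList]
    have hlen : ∀ j : ℕ, j < l.length + 1 → j < (toList (⟨l, a, c :: r⟩ : Zipper α)).length := by
      intro j hj; rw [length_toList]; simp; omega
    have key1 : (⟨l, a, c :: r⟩ : Zipper α) = focusAt ⟨a :: l, c, r⟩ l.length := by
      rw [← focusAt_congr htl l.length (hlen _ (by omega))]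
      exact (focusAt_left_length ⟨l, a, c :: r⟩).symm
    show (⟨l, a, c :: r⟩ : Zipper α) :: leftsAux l a (c :: r) = _
    rw [ih, List.length_cons, List.range_succ, List.map_append, List.reverse_append]
    simp only [List.map_cons, List.map_nil, List.reverse_cons, List.reverse_nil,
      List.nil_append, List.singleton_append]
    rw [← key1]
    congr 2
    apply List.map_congr_left
    intro j hj
    rw [List.mem_range] at hj
    exact focusAt_congr htl j (hlen _ (by omega))

theorem rightsAux_eq (r : List α) : ∀ (l : List α) (c : α),
    rightsAux l c r
      = (List.range r.length).map (fun j => focusAt ⟨l, c, r⟩ (l.length + 1 + j)) := by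
  induction r with
  | nil => intro l c; simp [rightsAux]
  | cons b r ih =>
    intro l c
    have htl : toList (⟨c :: l, b, r⟩ : Zipper α) = toList (⟨l, c, b :: r⟩ : Zipper α) := by
      simp [toList]
    have hlen : ∀ j : ℕ, j < r.length + 1 → l.length + 1 + j
        < (toList (⟨c :: l, b, r⟩ : Zipper α)).length := by
      intro j hj; rw [length_toList]; simp; omega
    have key1 : (⟨c :: l, b, r⟩ : Zipper α) = focusAt ⟨l, c, b :: r⟩ (l.length + 1) := by
      rw [← focusAt_congr htl (l.length + 1) (by simpa using hlen 0 (by omega))]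
      have := focusAt_left_length (⟨c :: l, b, r⟩ : Zipper α)
      simpa using this.symm
    show (⟨c :: l, b, r⟩ : Zipper α) :: rightsAux (c :: l) b r = _
    rw [ih]
    simp only [List.length_cons]
    rw [List.range_succ_eq_map, List.map_cons, List.map_map]
    rw [show l.length + 1 + 0 = l.length + 1 from rfl, ← key1]
    congr 1
    apply List.map_congr_left
    intro j hj
    rw [List.mem_range] at hj
    show focusAt ⟨c :: l, b, r⟩ (l.length + 1 + 1 + j) = focusAt ⟨l, c, b :: r⟩ (l.length + 1 + (j + 1))
    have h1 : l.length + 1 + (j + 1) = l.length + 1 + 1 + j := by omega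
    rw [h1]
    exact focusAt_congr htl _ (by have := hlen (j + 1) (by omega); omega)


theorem extend_eq (f : Zipper α → β) (z : Zipper α) :
    extend f z = ⟨((List.range z.left.length).map (fun j => f (focusAt z j))).reverse,
      f (focusAt z z.left.length),
      (List.range z.right.length).map (fun j => f (focusAt z (z.left.length + 1 + j)))⟩ := by
  obtain ⟨l, c, r⟩ := z
  show (⟨(leftsAux l c r).map f, f ⟨l, c, r⟩, (rightsAux l c r).map f⟩ : Zipper β) = _
  rw [leftsAux_eq, rightsAux_eq, focusAt_left_length]
  simp [List.map_reverse, List.map_map, Function.comp]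

theorem focusAt_left_len (z : Zipper α) (i : ℕ) (hi : i < (toList z).length) :
    (focusAt z i).left.length = i := by
  simp [focusAt]; omega

theorem focusAt_right_len (z : Zipper α) (i : ℕ) (hi : i < (toList z).length) :
    (focusAt z i).right.length = (toList z).length - (i + 1) := by
  simp [focusAt]

theorem toList_extend (f : Zipper α → β) (z : Zipper α) :
    toList (extend f z)
      = (List.range (toList z).length).map (fun i => f (focusAt z i)) := by
  rw [extend_eq]
  show ((List.range z.left.length).map (fun j => f (focusAt z j))).reverse.reverse
      ++ [f (focusAt z z.left.length)] ++ _ = _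
  rw [List.reverse_reverse, length_toList, List.range_add, List.range_succ]
  simp [List.map_map, Function.comp]

theorem length_toList_extend (f : Zipper α → β) (z : Zipper α) :
    (toList (extend f z)).length = (toList z).length := by
  rw [toList_extend]; simp

theorem focusAt_extend (f : Zipper α → β) (z : Zipper α) (i : ℕ)
    (hi : i < (toList z).length) :
    focusAt (extend f z) i = extend f (focusAt z i) := by
  have hn : i < (toList (extend f z)).length := by rwa [length_toList_extend]
  rw [focusAt_eq _ _ hn, extend_eq f (focusAt z i)]
  rw [Zipper.mk.injEq]
  refine ⟨?_, ?_, ?_⟩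
  · rw [toList_extend, ← List.map_take, List.take_range, Nat.min_eq_left hi.le,
      focusAt_left_len z i hi]
    congr 1
    apply List.map_congr_left
    intro j hj
    rw [List.mem_range] at hj
    rw [focusAt_focusAt z i j hi (by omega)]
  · have h2 : (toList (extend f z))[i]'hn
        = ((List.range (toList z).length).map (fun i => f (focusAt z i)))[i]'(by simpa using hi) :=
      List.getElem_of_eq (toList_extend f z) _
    rw [h2, List.getElem_map, List.getElem_range, focusAt_left_len z i hi,
      focusAt_focusAt z i i hi hi]
  · rw [toList_extend, ← List.map_drop, focusAt_right_len z i hi,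
      focusAt_left_len z i hi]
    have hsplit : List.range (toList z).length
        = List.range (i + 1) ++ (List.range ((toList z).length - (i + 1))).map
          (fun x => (i + 1) + x) := by
      rw [← List.range_add]; congr 1; omega
    rw [hsplit]
    have hnil : List.drop (i + 1) (List.range (i + 1)) = [] := by simp
    rw [List.drop_append_of_le_length (by simp), hnil, List.nil_append, List.map_map]
    apply List.map_congr_left
    intro j hj
    rw [List.mem_range] at hj
    show f (focusAt z (i + 1 + j)) = f (focusAt (focusAt z i) (i + 1 + j))
    rw [focusAt_focusAt z i _ hi (by omega)]

theorem extend_congr (f f' : Zipper α → β) (z : Zipper α)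
    (h : ∀ i < (toList z).length, f (focusAt z i) = f' (focusAt z i)) :
    extend f z = extend f' z := by
  have hm : z.left.length < (toList z).length := by rw [length_toList]; omega
  rw [extend_eq, extend_eq, Zipper.mk.injEq]
  refine ⟨?_, h _ hm, ?_⟩
  · congr 1
    apply List.map_congr_left
    intro j hj
    rw [List.mem_range] at hj
    exact h _ (by omega)
  · apply List.map_congr_left
    intro j hj
    rw [List.mem_range] at hj
    have : z.left.length + 1 + j < (toList z).length := by rw [length_toList]; omega
    exact h _ this

theorem extend_extend (h : Zipper β → γ) (f : Zipper α → β) (z : Zipper α) :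
    extend h (extend f z) = extend (fun z' => h (extend f z')) z := by
  have hm : z.left.length < (toList z).length := by rw [length_toList]; omega
  have hl : (extend f z).left.length = z.left.length := by
    rw [extend_eq]; simp
  have hr : (extend f z).right.length = z.right.length := by
    rw [extend_eq]; simp
  rw [extend_eq h (extend f z), extend_eq (fun z' => h (extend f z')) z, Zipper.mk.injEq]
  refine ⟨?_, ?_, ?_⟩
  · rw [hl]
    congr 1
    apply List.map_congr_left
    intro j hj
    rw [List.mem_range] at hj
    rw [focusAt_extend f z j (by omega)]
  · rw [hl, focusAt_extend f z _ hm]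
  · rw [hl, hr]
    apply List.map_congr_left
    intro j hj
    rw [List.mem_range] at hj
    have : z.left.length + 1 + j < (toList z).length := by rw [length_toList]; omega
    rw [focusAt_extend f z _ this]


end Zipper

open Zipper in
/-- Writer comonad counit: empty deletion set paired with the zipper focus. -/
def extractW {α : Type*} (p : Set ℕ × Zipper α) : Set ℕ × α :=
  (∅, Zipper.extract p.2)

open Zipper in
/-- Writer comonad extension: accumulate (by union) the deletion sets produced
by `f` at every position, and extend the value component over the zipper. -/
def extendW {α β : Type*} (f : Set ℕ × Zipper α → Set ℕ × β)
    (p : Set ℕ × Zipper α) : Set ℕ × Zipper β :=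
  (p.1 ∪ ⋃ i ∈ Finset.range (Zipper.toList p.2).length, (f (p.1, Zipper.focusAt p.2 i)).1,
   Zipper.extend (fun z' => (f (p.1, z')).2) p.2)

/-- Writer comonad law L3' with accumulating second arrow: if g is accumulating
(w' ⊆ (g (w', z')).1 for all inputs), then extendW g ∘ extendW f = extendW (g ∘ extendW f). -/
theorem writer_comonad_law3 {α β γ : Type*}
    (f : Set ℕ × Zipper α → Set ℕ × β) (g : Set ℕ × Zipper β → Set ℕ × γ)
    (hg : ∀ (w' : Set ℕ) (z' : Zipper β), w' ⊆ (g (w', z')).1) :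
    extendW g ∘ extendW f = extendW (g ∘ extendW f) := by
  funext p
  obtain ⟨w, z⟩ := p
  set n := (Zipper.toList z).length with hn
  have hn0 : 0 < n := by rw [hn, Zipper.length_toList]; omega
  set fw : Zipper α → β := fun z' => (f (w, z')).2 with hfw
  set W : Set ℕ := w ∪ ⋃ i ∈ Finset.range n, (f (w, Zipper.focusAt z i)).1 with hW
  have hEf : extendW f (w, z) = (W, Zipper.extend fw z) := rfl
  have key : ∀ i < n, extendW f (w, Zipper.focusAt z i)
      = (W, Zipper.focusAt (Zipper.extend fw z) i) := by
    intro i hi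
    unfold extendW
    refine Prod.ext ?_ ?_
    · show w ∪ ⋃ k ∈ Finset.range (Zipper.toList (Zipper.focusAt z i)).length,
        (f (w, Zipper.focusAt (Zipper.focusAt z i) k)).1 = W
      rw [Zipper.toList_focusAt z i hi, hW]
      congr 1
      apply Set.iUnion₂_congr
      intro k hk
      rw [Finset.mem_range] at hk
      rw [Zipper.focusAt_focusAt z i k hi hk]
    · show Zipper.extend fw (Zipper.focusAt z i) = _
      exact (Zipper.focusAt_extend fw z i hi).symm
  show extendW g (extendW f (w, z)) = extendW (g ∘ extendW f) (w, z)
  rw [hEf]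
  unfold extendW
  refine Prod.ext ?_ ?_
  · show W ∪ ⋃ j ∈ Finset.range (Zipper.toList (Zipper.extend fw z)).length,
        (g (W, Zipper.focusAt (Zipper.extend fw z) j)).1
      = w ∪ ⋃ i ∈ Finset.range n, ((g ∘ extendW f) (w, Zipper.focusAt z i)).1
    rw [Zipper.length_toList_extend]
    have hU : (⋃ i ∈ Finset.range n, ((g ∘ extendW f) (w, Zipper.focusAt z i)).1)
        = ⋃ i ∈ Finset.range n, (g (W, Zipper.focusAt (Zipper.extend fw z) i)).1 := by
      apply Set.iUnion₂_congr
      intro i hi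
      rw [Finset.mem_range] at hi
      simp only [Function.comp_apply, key i hi]
    rw [hU]
    set U := ⋃ i ∈ Finset.range n, (g (W, Zipper.focusAt (Zipper.extend fw z) i)).1 with hUdef
    have hWU : W ⊆ U := by
      refine (hg W (Zipper.focusAt (Zipper.extend fw z) 0)).trans ?_
      exact Set.subset_biUnion_of_mem (u := fun i => (g (W, Zipper.focusAt (Zipper.extend fw z) i)).1) (Finset.mem_range.mpr hn0)
    apply Set.Subset.antisymm
    · exact Set.union_subset (hWU.trans Set.subset_union_right) Set.subset_union_right
    · exact Set.union_subset_union_left U Set.subset_union_left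
  · show Zipper.extend (fun z' => (g (W, z')).2) (Zipper.extend fw z)
      = Zipper.extend (fun z' => ((g ∘ extendW f) (w, z')).2) z
    rw [Zipper.extend_extend]
    apply Zipper.extend_congr
    intro i hi
    simp only [Function.comp_apply, key i hi]
    rw [Zipper.focusAt_extend fw z i hi]
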